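/- arXiv:2110.07974 — 7 statements merged into one kernel-verified Lean document; each statement's English description precedes it below -/
import Mathlib

section
/- Let $0 < c < 1$ and let $b > 0$ be sufficiently small (depending on $c$). Let $A_1, \dots, A_n \in SL_2(\mathbb{C})$ and $0 < \delta_j < b$ for $1 \le j \le n$ satisfy: (i) $\delta_{j+1} \le \delta_j + b\delta_j^{3/2}$ for $1 \le j \le n-1$; (ii) $\|A_{j+1} - A_j\| \le b\delta_j$ for $1 \le j \le n-1$; (iii) $|\mathrm{Tr}\, A_j| \ge 2 + (1-b)\delta_j$ for $1 \le j \le n$. Then for any vector $u_0 \in \mathbb{C}^2$ with $\|A_1 u_0\| \ge \exp((1-c)\sqrt{\delta_1})\|u_0\|$, one has $\|A_n \cdots A_1 u_0\| \ge \exp\big((1-c)\sum_{j=1}^n \sqrt{\delta_j}\big)\|u_0\|$. -/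
/-!
For `A ∈ SL₂(ℂ)` the Cayley–Hamilton identity `A² = (Tr A) A - 1` gives
`|Tr A| ‖A u‖ ≤ ‖A (A u)‖ + ‖u‖`. Hence if `u_{k+1} = A_k u_k` has grown by the factor
`exp s_k`, then `‖A_k u_{k+1}‖ ≥ (|Tr A_k| - exp (-s_k)) ‖u_{k+1}‖`, and since `A_{k+1}` is
`b δ_k`-close to `A_k`, the next step grows by `exp s_{k+1}` as soon as
`exp s_{k+1} + exp (-s_k) + b δ_k ≤ 2 + (1 - b) δ_k`. With `s_k = (1 - c) √δ_k` this is a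
second-order Taylor estimate of `cosh`: the slack `(1 - (1 - c)²) δ_k ≥ c δ_k` absorbs the
error terms, all of size `O(b δ_k)`, once `b ≤ c / 4`. Growth then propagates by induction
and the factors multiply.
-/

open Real

lemma sqrt_le_sqrt_add_of_le_add_rpow {b d d' : ℝ} (hb : 0 ≤ b) (hd : 0 ≤ d)
    (h : d' ≤ d + b * d ^ ((3 : ℝ) / 2)) : √d' ≤ √d + b / 2 * d := by
  have hd32 : d ^ ((3 : ℝ) / 2) = d * √d := by
    rw [show (3 : ℝ) / 2 = 1 + 1 / 2 by norm_num, rpow_add' hd (by norm_num), rpow_one,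
      ← sqrt_eq_rpow]
  rw [sqrt_le_left (by positivity)]
  nlinarith [sq_sqrt hd, sq_nonneg (b / 2 * d)]

lemma exp_add_exp_neg_le {s : ℝ} (hs : |s| ≤ 1) : exp s + exp (-s) ≤ 2 + s ^ 2 + s ^ 4 / 2 := by
  have hs2 : |s ^ 2 / 2| ≤ 1 := by
    rw [abs_of_nonneg (by positivity)]
    nlinarith [sq_abs s, abs_nonneg s]
  have hexp := (abs_le.1 (abs_exp_sub_one_sub_id_le hs2)).2
  calc exp s + exp (-s) = 2 * cosh s := by rw [cosh_eq]; ring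
    _ ≤ 2 * exp (s ^ 2 / 2) := by gcongr; exact cosh_le_exp_half_sq s
    _ ≤ 2 + s ^ 2 + s ^ 4 / 2 := by nlinarith

lemma exp_sub_exp_le_exp_mul_sub (x y : ℝ) : exp y - exp x ≤ exp y * (y - x) := by
  have h := mul_le_mul_of_nonneg_left (add_one_le_exp (x - y)) (exp_pos y).le
  rw [← exp_add, add_sub_cancel] at h
  linarith

lemma exp_sqrt_add_exp_neg_sqrt_add_le {b c d d' : ℝ} (hc : c < 1) (hbc : b ≤ c / 4)
    (hd : 0 < d) (hdb : d < b) (hd'b : d' < b)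
    (hstep : d' ≤ d + b * d ^ ((3 : ℝ) / 2)) :
    exp ((1 - c) * √d') + exp (-((1 - c) * √d)) + b * d ≤ 2 + (1 - b) * d := by
  have hb : 0 < b := hd.trans hdb
  have hc0 : 0 < c := by linarith
  set s := (1 - c) * √d with hs_def
  set s' := (1 - c) * √d' with hs'_def
  have hshift : s' - s ≤ b * d / 2 := by
    have := sqrt_le_sqrt_add_of_le_add_rpow hb.le hd.le hstep
    nlinarith [mul_pos hb hd]
  have hs' : s' ≤ 1 := by
    have : √d' ≤ 1 := sqrt_le_one.2 (by linarith)
    nlinarith [sqrt_nonneg d']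
  have hs : |s| ≤ 1 := by
    have : √d ≤ 1 := sqrt_le_one.2 (by linarith)
    rw [abs_of_nonneg (by positivity)]
    nlinarith [sqrt_nonneg d]
  have hexp_s' : exp s' ≤ exp s + 3 / 2 * (b * d) := by
    have h3 : exp s' ≤ 3 := (exp_le_exp.2 hs').trans (by linarith [exp_one_lt_d9])
    nlinarith [exp_sub_exp_le_exp_mul_sub s s', exp_pos s', mul_pos hb hd]
  have hs2 : s ^ 2 = (1 - c) ^ 2 * d := by rw [hs_def, mul_pow, sq_sqrt hd.le]
  have hs4 : s ^ 4 ≤ b * d := by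
    have hc4 : ((1 - c) ^ 2) ^ 2 ≤ 1 := pow_le_one₀ (by positivity) (by nlinarith)
    rw [show s ^ 4 = (s ^ 2) ^ 2 by ring, hs2]
    nlinarith [mul_pos hd hd]
  have hmargin : (1 - c) ^ 2 + 4 * b ≤ 1 := by nlinarith
  nlinarith [exp_add_exp_neg_le hs, mul_le_mul_of_nonneg_right hmargin hd.le]

lemma Matrix.mul_self_eq_trace_smul_sub_det_smul_one {R : Type*} [CommRing R]
    (A : Matrix (Fin 2) (Fin 2) R) : A * A = A.trace • A - A.det • 1 := by
  ext i j
  fin_cases i <;> fin_cases j <;>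
    simp [Matrix.mul_apply, Matrix.trace_fin_two, Matrix.det_fin_two] <;> ring

lemma List.prod_reverse_take_succ_ofFn {M : Type*} [Monoid M] {n : ℕ} (A : Fin n → M) (k : ℕ)
    (hk : k < n) :
    ((List.ofFn A).take (k + 1)).reverse.prod =
      A ⟨k, hk⟩ * ((List.ofFn A).take k).reverse.prod := by
  simp [List.take_add_one, hk]

lemma exp_sum_mul_le_of_forall {n : ℕ} (s : Fin n → ℝ) (r : ℕ → ℝ)
    (h : ∀ k (hk : k < n), exp (s ⟨k, hk⟩) * r k ≤ r (k + 1)) :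
    exp (∑ k, s k) * r 0 ≤ r n := by
  induction n with
  | zero => simp
  | succ n ih =>
    have hinit := ih (fun k => s k.castSucc) fun k hk => h k (hk.trans n.lt_succ_self)
    calc exp (∑ k, s k) * r 0 = exp (s (Fin.last n)) * (exp (∑ k : Fin n, s k.castSucc) * r 0) := by
          rw [Fin.sum_univ_castSucc, exp_add]; ring
      _ ≤ exp (s (Fin.last n)) * r n := by gcongr
      _ ≤ r (n + 1) := h n n.lt_succ_self

section

variable {𝕜 E : Type*} [NontriviallyNormedField 𝕜] [NormedAddCommGroup E] [NormedSpace 𝕜 E]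

lemma ContinuousLinearMap.exp_mul_norm_le_norm_apply_apply {f g : E →L[𝕜] E} {t : 𝕜} {x : E}
    {s s' : ℝ} (hf : f * f = t • f - 1) (hx : exp s * ‖x‖ ≤ ‖f x‖)
    (ht : exp s' + exp (-s) + ‖g - f‖ ≤ ‖t‖) : exp s' * ‖f x‖ ≤ ‖g (f x)‖ := by
  have hcayley : t • f x = f (f x) + x := by
    have := congr($hf x)
    simp only [mul_apply_eq_comp, sub_apply, smul_apply, one_apply_eq_self] at this
    rw [this]; abel
  have htrace : ‖t‖ * ‖f x‖ ≤ ‖f (f x)‖ + ‖x‖ := by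
    rw [← norm_smul, hcayley]; exact norm_add_le _ _
  have hperturb : ‖f (f x)‖ ≤ ‖g (f x)‖ + ‖g - f‖ * ‖f x‖ := by
    have := (g - f).le_opNorm (f x)
    rw [sub_apply] at this
    linarith [norm_sub_norm_le (f (f x)) (g (f x)), norm_sub_rev (g (f x)) (f (f x))]
  have hback : ‖x‖ ≤ exp (-s) * ‖f x‖ := by
    rw [exp_neg, inv_mul_eq_div, le_div_iff₀ (exp_pos s), mul_comm]; exact hx
  nlinarith [norm_nonneg (f x)]

lemma exp_mul_norm_le_norm_succ {n : ℕ} (T : Fin n → E →L[𝕜] E) (t : Fin n → 𝕜) (s : Fin n → ℝ)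
    (x : ℕ → E) (hx : ∀ k (hk : k < n), x (k + 1) = T ⟨k, hk⟩ (x k))
    (hT : ∀ j, T j * T j = t j • T j - 1)
    (hstep : ∀ (j : ℕ) (h : j + 1 < n), exp (s ⟨j + 1, h⟩) + exp (-s ⟨j, Nat.lt_of_succ_lt h⟩)
      + ‖T ⟨j + 1, h⟩ - T ⟨j, Nat.lt_of_succ_lt h⟩‖ ≤ ‖t ⟨j, Nat.lt_of_succ_lt h⟩‖)
    (h0 : ∀ hn : 0 < n, exp (s ⟨0, hn⟩) * ‖x 0‖ ≤ ‖x 1‖) :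
    ∀ k (hk : k < n), exp (s ⟨k, hk⟩) * ‖x k‖ ≤ ‖x (k + 1)‖ := by
  intro k
  induction k with
  | zero => exact h0
  | succ k ih =>
    intro hk
    have hk' := Nat.lt_of_succ_lt hk
    have := ih hk'
    rw [hx k hk'] at this
    rw [hx (k + 1) hk, hx k hk']
    exact (T ⟨k, hk'⟩).exp_mul_norm_le_norm_apply_apply (hT _) this (hstep k hk)

end

/-- Avalanche principle for weakly hyperbolic products of `SL₂(ℂ)` matrices: for `0 < c < 1`
and sufficiently small `b > 0`, if `0 < δ_j < b`, `δ_{j+1} ≤ δ_j + b δ_j^{3/2}`,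
`‖A_{j+1} - A_j‖ ≤ b δ_j`, `|Tr A_j| ≥ 2 + (1-b) δ_j`, and
`‖A₁ u₀‖ ≥ exp((1-c)√δ₁) ‖u₀‖`, then
`‖A_n ⋯ A₁ u₀‖ ≥ exp((1-c) ∑_j √δ_j) ‖u₀‖`. Matrices act on `ℂ²` with its Euclidean norm,
and `‖·‖` on matrices is the associated operator norm. -/
theorem avalanche (c : ℝ) (hc0 : 0 < c) (hc1 : c < 1) :
    ∃ b₀ > 0, ∀ b : ℝ, 0 < b → b < b₀ →
      ∀ (n : ℕ) (hn : 0 < n) (A : Fin n → Matrix (Fin 2) (Fin 2) ℂ) (δ : Fin n → ℝ),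
        (∀ j, (A j).det = 1) →
        (∀ j, 0 < δ j ∧ δ j < b) →
        (∀ (j : ℕ) (h : j + 1 < n),
          δ ⟨j + 1, h⟩ ≤ δ ⟨j, Nat.lt_of_succ_lt h⟩
            + b * δ ⟨j, Nat.lt_of_succ_lt h⟩ ^ ((3 : ℝ) / 2)) →
        (∀ (j : ℕ) (h : j + 1 < n),
          ‖Matrix.toEuclideanCLM (𝕜 := ℂ) (A ⟨j + 1, h⟩ - A ⟨j, Nat.lt_of_succ_lt h⟩)‖
            ≤ b * δ ⟨j, Nat.lt_of_succ_lt h⟩) →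
        (∀ j, 2 + (1 - b) * δ j ≤ ‖(A j).trace‖) →
        ∀ u₀ : EuclideanSpace ℂ (Fin 2),
          Real.exp ((1 - c) * Real.sqrt (δ ⟨0, hn⟩)) * ‖u₀‖
              ≤ ‖Matrix.toEuclideanCLM (𝕜 := ℂ) (A ⟨0, hn⟩) u₀‖ →
          Real.exp ((1 - c) * ∑ j, Real.sqrt (δ j)) * ‖u₀‖
            ≤ ‖Matrix.toEuclideanCLM (𝕜 := ℂ) ((List.ofFn A).reverse.prod) u₀‖ := by
  refine ⟨c / 4, by positivity, fun b _ hbc n hn A δ hdet hδ hδstep hAstep htr u₀ hu₀ => ?_⟩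
  let T j := Matrix.toEuclideanCLM (𝕜 := ℂ) (A j)
  let x k := Matrix.toEuclideanCLM (𝕜 := ℂ) (((List.ofFn A).take k).reverse.prod) u₀
  have hx k (hk : k < n) : x (k + 1) = T ⟨k, hk⟩ (x k) := by
    simp [x, T, List.prod_reverse_take_succ_ofFn A k hk]
  have hT j : T j * T j = (A j).trace • T j - 1 := by
    simp only [T, ← map_mul, Matrix.mul_self_eq_trace_smul_sub_det_smul_one, hdet, one_smul,
      map_sub, map_smul, map_one]
  have hstep (j : ℕ) (h : j + 1 < n) :
      exp ((1 - c) * √(δ ⟨j + 1, h⟩)) + exp (-((1 - c) * √(δ ⟨j, Nat.lt_of_succ_lt h⟩)))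
        + ‖T ⟨j + 1, h⟩ - T ⟨j, Nat.lt_of_succ_lt h⟩‖ ≤ ‖(A ⟨j, Nat.lt_of_succ_lt h⟩).trace‖ := by
    have := exp_sqrt_add_exp_neg_sqrt_add_le hc1 hbc.le (hδ _).1 (hδ _).2 (hδ ⟨j + 1, h⟩).2
      (hδstep j h)
    have hA := hAstep j h
    rw [map_sub] at hA
    linarith [htr ⟨j, Nat.lt_of_succ_lt h⟩]
  let s j := (1 - c) * √(δ j)
  have hgrowth := exp_mul_norm_le_norm_succ T (fun j => (A j).trace) s x hx hT hstep
    (fun _ => by simpa [hx 0 hn, x] using hu₀)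
  have hxn : x n = Matrix.toEuclideanCLM (𝕜 := ℂ) ((List.ofFn A).reverse.prod) u₀ := by
    simp [x, List.take_of_length_le]
  simpa [s, x, Finset.mul_sum, hxn] using exp_sum_mul_le_of_forall s (fun k => ‖x k‖) hgrowth
end

section
/- Let $A \subset (a,b)$ be a finite union of open intervals such that (1) the total Lebesgue measure $|A| \le \tau(b-a)$ for some $0 \le \tau \le 1/3$, and (2) $A$ is $\tau(b-a)$-dense in $(a + \tau(b-a),\, b - \tau(b-a))$, i.e., every point of this subinterval lies within distance $\tau(b-a)$ of a point of $A$. Then the number of intervals comprising $A$ is at least $\frac{1-2\tau}{3\tau}$. -/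
open MeasureTheory

/-- If `A ⊆ (a,b)` is a disjoint finite union of `N` open intervals with total Lebesgue
measure at most `τ(b-a)` for some `0 ≤ τ ≤ 1/3`, and `A` is `τ(b-a)`-dense in
`(a + τ(b-a), b - τ(b-a))`, then `N ≥ (1-2τ)/(3τ)`. -/
theorem card_intervals_of_meager_dense (a b τ : ℝ) (hab : a < b) (hτ0 : 0 ≤ τ) (hτ : τ ≤ 1 / 3)
    (N : ℕ) (c d : Fin N → ℝ) (hcd : ∀ i, c i < d i)
    (hsub : ∀ i, Set.Ioo (c i) (d i) ⊆ Set.Ioo a b)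
    (hdisj : Pairwise fun i j => Disjoint (Set.Ioo (c i) (d i)) (Set.Ioo (c j) (d j)))
    (hmeas : volume (⋃ i, Set.Ioo (c i) (d i)) ≤ ENNReal.ofReal (τ * (b - a)))
    (hdense : ∀ x ∈ Set.Ioo (a + τ * (b - a)) (b - τ * (b - a)),
      ∃ y ∈ ⋃ i, Set.Ioo (c i) (d i), |x - y| ≤ τ * (b - a)) :
    (1 - 2 * τ) / (3 * τ) ≤ (N : ℝ) := by
  rcases eq_or_lt_of_le hτ0 with h0 | hτpos
  · rw [← h0]
    simp
  set ε := τ * (b - a) with hεdef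
  have hba : 0 < b - a := sub_pos.mpr hab
  have hεpos : 0 < ε := mul_pos hτpos hba
  have hε3 : ε ≤ (b - a) / 3 := by
    rw [hεdef]; nlinarith
  have hmid : (a + b) / 2 ∈ Set.Ioo (a + ε) (b - ε) := by
    constructor <;> [nlinarith; nlinarith]
  have hN1 : 1 ≤ N := by
    rcases Nat.eq_zero_or_pos N with h | h
    · exfalso
      obtain ⟨y, hy, -⟩ := hdense _ hmid
      subst h
      simp at hy
    · exact h
  have hcover : Set.Ioo (a + ε) (b - ε) ⊆ ⋃ i, Set.Ioo (c i - ε) (d i + ε) := by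
    intro x hx
    obtain ⟨y, hy, hxy⟩ := hdense x hx
    simp only [Set.mem_iUnion, Set.mem_Ioo] at hy ⊢
    obtain ⟨i, hy1, hy2⟩ := hy
    rw [abs_le] at hxy
    exact ⟨i, by linarith [hxy.1, hxy.2], by linarith [hxy.1, hxy.2]⟩
  have hsum : ∑ i, (d i - c i) ≤ ε := by
    have hvol : volume (⋃ i, Set.Ioo (c i) (d i)) = ∑ i, ENNReal.ofReal (d i - c i) := by
      rw [measure_iUnion hdisj fun i => measurableSet_Ioo, tsum_fintype]
      simp [Real.volume_Ioo]
    rw [hvol, ← ENNReal.ofReal_sum_of_nonneg (fun i _ => by linarith [hcd i])] at hmeas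
    exact (ENNReal.ofReal_le_ofReal_iff hεpos.le).mp hmeas
  have hsumnn : 0 ≤ ∑ i, (d i + ε - (c i - ε)) :=
    Finset.sum_nonneg fun i _ => by linarith [hcd i]
  have hlen : b - ε - (a + ε) ≤ ∑ i, (d i + ε - (c i - ε)) := by
    have h1 : volume (Set.Ioo (a + ε) (b - ε)) ≤ ∑ i, volume (Set.Ioo (c i - ε) (d i + ε)) :=
      le_trans (measure_mono hcover) (measure_iUnion_fintype_le _ _)
    have h2 : ∑ i, volume (Set.Ioo (c i - ε) (d i + ε))
        = ENNReal.ofReal (∑ i, (d i + ε - (c i - ε))) := by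
      rw [ENNReal.ofReal_sum_of_nonneg (fun i _ => by linarith [hcd i])]
      simp [Real.volume_Ioo]
    rw [Real.volume_Ioo, h2] at h1
    exact (ENNReal.ofReal_le_ofReal_iff hsumnn).mp h1
  have hsum2 : ∑ i, (d i + ε - (c i - ε)) = (∑ i, (d i - c i)) + 2 * N * ε := by
    have he : ∀ i ∈ Finset.univ, d i + ε - (c i - ε) = (d i - c i) + 2 * ε := by
      intro i _; ring
    rw [Finset.sum_congr rfl he, Finset.sum_add_distrib, Finset.sum_const, Finset.card_univ,
      Fintype.card_fin, nsmul_eq_mul]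
    ring
  -- combine
  have key : b - a - 2 * ε ≤ 3 * N * ε := by
    have hNe : ε ≤ (N : ℝ) * ε := le_mul_of_one_le_left hεpos.le (by exact_mod_cast hN1)
    rw [hsum2] at hlen
    nlinarith
  rw [div_le_iff₀ (by positivity)]
  rw [hεdef] at key
  nlinarith
end

section
/- Let $[c,d] \subset [a,b]$ be nested closed intervals with $c < d$, and let $p$ be a real polynomial of degree at most $q$. Set $t = (d-c)/(b-a)$. Then $\sup_{x \in [a,b]} |p(x)| \le T_q(2/t - 1)\, \sup_{x \in [c,d]} |p(x)|$, where $T_q$ is the Chebyshev polynomial of the first kind of degree $q$. -/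
/-!
After the affine change of variables taking `[c, d]` onto `[-1, 1]`, the interval `[a, b]` lands
inside `[-s, s]` with `s = 2 / t - 1`. A polynomial of degree at most `n` bounded by `M` on
`[-1, 1]` satisfies `|P x| ≤ T_n(|x|) M` for `|x| ≥ 1`: this is the extremal property of `T_n`
at the Chebyshev nodes, `eval_iterate_derivative_le_of_forall_abs_le_one` with no derivative
taken. Since `T_n (cosh θ) = cosh (n θ)`, `T_n` increases on `[1, ∞)`, so `T_n(|x|) ≤ T_n(s)`.
-/

open Polynomial Polynomial.Chebyshev Real Set

namespace Polynomial.Chebyshev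

theorem monotoneOn_eval_T_real (n : ℤ) : MonotoneOn (T ℝ n).eval (Ici 1) := by
  intro x hx y hy hxy
  dsimp only
  rw [← cosh_arcosh hx, ← cosh_arcosh hy, T_real_cosh, T_real_cosh, cosh_le_cosh, abs_mul,
    abs_mul, abs_of_nonneg (arcosh_nonneg hx), abs_of_nonneg (arcosh_nonneg hy)]
  gcongr
  exact (arcosh_le_arcosh (by linarith [mem_Ici.mp hx]) (by linarith [mem_Ici.mp hy])).mpr hxy

theorem abs_eval_le_eval_T_real {n : ℕ} {P : ℝ[X]} (hPdeg : P.natDegree ≤ n)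
    (hPbnd : ∀ y ∈ Icc (-1) 1, |P.eval y| ≤ 1) {x : ℝ} (hx : 1 ≤ x) :
    |P.eval x| ≤ (T ℝ n).eval x := by
  refine abs_le'.mpr ⟨?_, ?_⟩
  · exact eval_iterate_derivative_le_of_forall_abs_le_one (k := 0) hx
      (degree_le_of_natDegree_le hPdeg) hPbnd
  · simpa using eval_iterate_derivative_le_of_forall_abs_le_one (P := -P) (k := 0) hx
      (degree_le_of_natDegree_le (by rwa [natDegree_neg])) (by simpa using hPbnd)

theorem abs_eval_le_eval_T_real_mul {n : ℕ} {P : ℝ[X]} {M : ℝ} (hPdeg : P.natDegree ≤ n)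
    (hPbnd : ∀ y ∈ Icc (-1) 1, |P.eval y| ≤ M) {x : ℝ} (hx : 1 ≤ x) :
    |P.eval x| ≤ (T ℝ n).eval x * M := by
  rcases (abs_nonneg _).trans (hPbnd 0 (by norm_num)) |>.eq_or_lt with hM | hM
  · have hP : P = 0 := by
      refine eq_zero_of_infinite_isRoot P ((Icc_infinite (by norm_num : (-1 : ℝ) < 1)).mono ?_)
      intro y hy
      simpa [← hM] using hPbnd y hy
    simp [hP, ← hM]
  · have hscaled := abs_eval_le_eval_T_real (P := M⁻¹ • P) ((natDegree_smul_le _ _).trans hPdeg)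
      (fun y hy => by
        rw [eval_smul, smul_eq_mul, abs_mul, abs_inv, abs_of_pos hM]
        exact inv_mul_le_one_of_le₀ (hPbnd y hy) hM.le) hx
    rw [eval_smul, smul_eq_mul, abs_mul, abs_inv, abs_of_pos hM, inv_mul_le_iff₀ hM] at hscaled
    linarith

theorem abs_eval_le_eval_T_real_mul_of_abs_le {n : ℕ} {P : ℝ[X]} {M : ℝ}
    (hPdeg : P.natDegree ≤ n) (hPbnd : ∀ y ∈ Icc (-1) 1, |P.eval y| ≤ M) {s x : ℝ}
    (hs : 1 ≤ s) (hx : |x| ≤ s) :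
    |P.eval x| ≤ (T ℝ n).eval s * M := by
  have hM : 0 ≤ M := (abs_nonneg _).trans (hPbnd 0 (by norm_num))
  have hTs : 1 ≤ (T ℝ n).eval s := one_le_eval_T_real n hs
  have hmono {y : ℝ} (hy : 1 ≤ y) (hys : y ≤ s) : (T ℝ n).eval y * M ≤ (T ℝ n).eval s * M :=
    mul_le_mul_of_nonneg_right (monotoneOn_eval_T_real n hy (hy.trans hys) hys) hM
  rcases le_or_gt x 1 with hx₁ | hx₁
  · rcases le_or_gt (-1) x with hx₂ | hx₂
    · exact (hPbnd x ⟨hx₂, hx₁⟩).trans (le_mul_of_one_le_left hM hTs)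
    · have hPneg : (P.comp (-X)).natDegree ≤ n := by simpa [natDegree_comp] using hPdeg
      have := abs_eval_le_eval_T_real_mul hPneg
        (fun y hy => by simpa using hPbnd (-y) ⟨by linarith [hy.2], by linarith [hy.1]⟩)
        (x := -x) (by linarith)
      simp only [eval_comp, eval_neg, eval_X, neg_neg] at this
      exact this.trans (hmono (by linarith) (by linarith [neg_abs_le x]))
  · exact (abs_eval_le_eval_T_real_mul hPdeg hPbnd hx₁.le).trans
      (hmono hx₁.le (le_of_abs_le hx))

theorem abs_eval_le_eval_T_real_mul_of_abs_sub_midpoint_le {n : ℕ} {p : ℝ[X]} {M c d : ℝ}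
    (hcd : c < d) (hpdeg : p.natDegree ≤ n) (hpbnd : ∀ y ∈ Icc c d, |p.eval y| ≤ M) {s x : ℝ}
    (hs : 1 ≤ s) (hx : |x - (c + d) / 2| ≤ s * ((d - c) / 2)) :
    |p.eval x| ≤ (T ℝ n).eval s * M := by
  have hr : 0 < (d - c) / 2 := by linarith
  set P := p.comp (Polynomial.C ((d - c) / 2) * X + Polynomial.C ((c + d) / 2))
  have hPeval (u : ℝ) : P.eval u = p.eval ((d - c) / 2 * u + (c + d) / 2) := by simp [P]
  have hPdeg : P.natDegree ≤ n :=
    natDegree_comp_le.trans ((Nat.mul_le_mul hpdeg natDegree_linear_le).trans_eq n.mul_one)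
  have hPbnd : ∀ u ∈ Icc (-1) 1, |P.eval u| ≤ M := fun u ⟨hu₁, hu₂⟩ => by
    rw [hPeval]
    exact hpbnd _ ⟨by nlinarith, by nlinarith⟩
  have hu : |(x - (c + d) / 2) / ((d - c) / 2)| ≤ s := by
    rwa [abs_div, abs_of_pos hr, div_le_iff₀ hr]
  have := abs_eval_le_eval_T_real_mul_of_abs_le hPdeg hPbnd hs hu
  rwa [hPeval, mul_div_cancel₀ _ hr.ne', sub_add_cancel] at this

end Polynomial.Chebyshev

/-- Chebyshev's inequality: for nested intervals `[c,d] ⊆ [a,b]` and a real polynomial `p`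
of degree at most `q`, with `t = (d-c)/(b-a)`,
`sup_{[a,b]} |p| ≤ T_q(2/t - 1) · sup_{[c,d]} |p|`. -/
theorem chebyshev_remez_inequality (a b c d : ℝ) (hac : a ≤ c) (hcd : c < d) (hdb : d ≤ b)
    (q : ℕ) (p : Polynomial ℝ) (hdeg : p.natDegree ≤ q) :
    sSup ((fun x => |p.eval x|) '' Set.Icc a b)
      ≤ (Polynomial.Chebyshev.T ℝ q).eval (2 / ((d - c) / (b - a)) - 1)
        * sSup ((fun x => |p.eval x|) '' Set.Icc c d) := by
  have hdc : 0 < d - c := by linarith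
  have hbdd : BddAbove ((fun x => |p.eval x|) '' Icc c d) :=
    isCompact_Icc.bddAbove_image p.continuous.abs.continuousOn
  have hs : 2 / ((d - c) / (b - a)) - 1 = 2 * (b - a) / (d - c) - 1 := by
    rw [div_div_eq_mul_div]
  refine csSup_le ((nonempty_Icc.mpr (by linarith)).image _) ?_
  rintro _ ⟨x, ⟨hax, hxb⟩, rfl⟩
  refine abs_eval_le_eval_T_real_mul_of_abs_sub_midpoint_le hcd hdeg
    (fun y hy => le_csSup hbdd (mem_image_of_mem _ hy)) ?_ ?_
  · rw [hs, le_sub_iff_add_le, le_div_iff₀ hdc]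
    linarith
  · have hradius : (2 * (b - a) / (d - c) - 1) * ((d - c) / 2) = b - a - (d - c) / 2 := by
      field_simp
    rw [hs, hradius, abs_le]
    constructor <;> linarith
end

section
/- For every integer $q \ge 1$ and every real $x \ge 0$, the Chebyshev polynomial of the first kind satisfies $T_q(1 + x) \le \exp(q^2 x)$. -/
lemma one_add_sq_div_two_le_cosh (t : ℝ) : 1 + t ^ 2 / 2 ≤ Real.cosh t := by
  have h := Real.hasSum_cosh t
  have h2 : ∑ n ∈ Finset.range 2, t ^ (2 * n) / ((2 * n).factorial : ℝ) ≤ Real.cosh t := by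
    refine sum_le_hasSum _ (fun n _ => ?_) h
    exact div_nonneg ((even_two_mul n).pow_nonneg t) (by positivity)
  simpa [Finset.sum_range_succ, Nat.factorial] using h2

lemma cheb_T_cosh (q : ℕ) (t : ℝ) :
    (Polynomial.Chebyshev.T ℝ q).eval (Real.cosh t) = Real.cosh (q * t) := by
  have := Polynomial.Chebyshev.T_complex_cos (t * Complex.I) (q : ℤ)
  rw [Complex.cos_mul_I] at this
  rw [show ((q : ℤ) : ℂ) * ((t : ℂ) * Complex.I) = (((q : ℝ) * t : ℝ) : ℂ) * Complex.I by
    push_cast; ring, Complex.cos_mul_I] at this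
  have h3 := Polynomial.Chebyshev.complex_ofReal_eval_T (Real.cosh t) (q : ℤ)
  rw [Complex.ofReal_cosh, this, ← Complex.ofReal_cosh] at h3
  exact_mod_cast h3

/-- For every `q ≥ 1` and real `x ≥ 0`, `T_q(1 + x) ≤ exp (q² x)`. -/
theorem chebyshev_T_one_add_le_exp (q : ℕ) (hq : 1 ≤ q) (x : ℝ) (hx : 0 ≤ x) :
    (Polynomial.Chebyshev.T ℝ q).eval (1 + x) ≤ Real.exp ((q : ℝ) ^ 2 * x) := by
  -- find t ∈ [0, √(2x)] with cosh t = 1 + x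
  have hs : (0:ℝ) ≤ Real.sqrt (2 * x) := Real.sqrt_nonneg _
  have hIVT : ∃ t ∈ Set.Icc 0 (Real.sqrt (2 * x)), Real.cosh t = 1 + x := by
    have hc : ContinuousOn Real.cosh (Set.Icc 0 (Real.sqrt (2 * x))) :=
      Real.continuous_cosh.continuousOn
    have h1 : Real.cosh 0 ≤ 1 + x := by simp [Real.cosh_zero]; linarith
    have h2 : 1 + x ≤ Real.cosh (Real.sqrt (2 * x)) := by
      have := one_add_sq_div_two_le_cosh (Real.sqrt (2 * x))
      rwa [Real.sq_sqrt (by linarith), mul_div_cancel_left₀ x (two_ne_zero)] at this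
    exact intermediate_value_Icc hs hc ⟨h1, h2⟩
  obtain ⟨t, ⟨ht0, hts⟩, hcosh⟩ := hIVT
  have ht2 : t ^ 2 ≤ 2 * x := by
    have := Real.sq_sqrt (by linarith : (0:ℝ) ≤ 2 * x)
    nlinarith [Real.sqrt_nonneg (2 * x)]
  calc (Polynomial.Chebyshev.T ℝ q).eval (1 + x)
      = Real.cosh ((q : ℝ) * t) := by rw [← hcosh, cheb_T_cosh]
    _ ≤ Real.exp (((q : ℝ) * t) ^ 2 / 2) := Real.cosh_le_exp_half_sq _
    _ ≤ Real.exp ((q : ℝ) ^ 2 * x) := by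
        apply Real.exp_le_exp.2
        have hq2 : (0:ℝ) ≤ (q : ℝ) ^ 2 := by positivity
        nlinarith
end

section
/- Let $\omega : \{2^{-j} : j \ge 0\} \to (0,\infty)$ be non-decreasing in the sense that $\omega(2^{-j-1}) \le \omega(2^{-j})$ for all $j \ge 0$. Define $(W_1\omega)(2^{-j}) = \sum_{0 \le k \le j} 2^{-2(j-k)}\omega(2^{-k})$ and $(W_2\omega)(2^{-j}) = \sum_{0 \le k \le j} 2^{-(j-k)}\omega(2^{-k}) + \sum_{k > j}\omega(2^{-k})$ (the latter possibly infinite). Then $(W_2 W_1 \omega)(2^{-j}) \le 4 (W_2\omega)(2^{-j})$ for all $j \ge 0$. -/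
open scoped ENNReal

/-- `(W₁ω)(2^{-j}) = ∑_{0 ≤ k ≤ j} 2^{-2(j-k)} ω(2^{-k})`, with `ω j` standing for `ω(2^{-j})`. -/
noncomputable def W1 (ω : ℕ → ℝ≥0∞) (j : ℕ) : ℝ≥0∞ :=
  ∑ k ∈ Finset.range (j + 1), (2⁻¹ : ℝ≥0∞) ^ (2 * (j - k)) * ω k

/-- `(W₂ω)(2^{-j}) = ∑_{0 ≤ k ≤ j} 2^{-(j-k)} ω(2^{-k}) + ∑_{k > j} ω(2^{-k})`,
with `ω j` standing for `ω(2^{-j})`; the tail sum is taken in the extended reals. -/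
noncomputable def W2 (ω : ℕ → ℝ≥0∞) (j : ℕ) : ℝ≥0∞ :=
  ∑ k ∈ Finset.range (j + 1), (2⁻¹ : ℝ≥0∞) ^ (j - k) * ω k + ∑' k : ℕ, ω (j + 1 + k)

/-!
Both operators are kernel operators: with truncated subtraction, `W₂` has kernel `2^{-(j-k)}`
for all `k` (the weight is `1` once `k > j`), and `W₁` has kernel `4^{-(m-k)}` for `k ≤ m`.
By `j - k ≤ (j - m) + (m - k)`, the composed kernel satisfies
`2^{-(j-m)} 4^{-(m-k)} ≤ 2^{-(j-k)} 2^{-(m-k)}`, and summing the geometric series over `m ≥ k`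
gives `W₂W₁ω ≤ 2 W₂ω`.
-/

open Finset

lemma W2_eq_tsum (ω : ℕ → ℝ≥0∞) (j : ℕ) : W2 ω j = ∑' k, 2⁻¹ ^ (j - k) * ω k := by
  rw [W2, eq_comm, ← Summable.sum_add_tsum_nat_add' (k := j + 1) ENNReal.summable]
  congr 1
  refine tsum_congr fun k => ?_
  rw [add_comm k, Nat.sub_eq_zero_of_le (by omega), pow_zero, one_mul]

lemma W1_eq_tsum (ω : ℕ → ℝ≥0∞) (m : ℕ) :
    W1 ω m = ∑' k, (if k ≤ m then 2⁻¹ ^ (2 * (m - k)) else 0) * ω k := by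
  rw [W1, tsum_eq_sum (s := range (m + 1)) fun k hk => by
    rw [if_neg (by simpa [Nat.lt_succ_iff] using hk), zero_mul]]
  refine sum_congr rfl fun k hk => ?_
  rw [if_pos (Nat.lt_succ_iff.mp (mem_range.mp hk))]

lemma tsum_half_pow_mul_quarter_pow_le (j k : ℕ) :
    ∑' m, (2⁻¹ : ℝ≥0∞) ^ (j - m) * (if k ≤ m then 2⁻¹ ^ (2 * (m - k)) else 0)
      ≤ 2 * 2⁻¹ ^ (j - k) := by
  calc _ ≤ ∑' m, (2⁻¹ : ℝ≥0∞) ^ (j - k) * (if k ≤ m then 2⁻¹ ^ (m - k) else 0) := by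
        refine ENNReal.tsum_le_tsum fun m => ?_
        split_ifs with hkm
        · rw [← pow_add, ← pow_add]
          exact pow_le_pow_right_of_le_one' (by norm_num) (by omega)
        · simp
    _ = 2⁻¹ ^ (j - k) * ∑' n, (2⁻¹ : ℝ≥0∞) ^ n := by
        rw [ENNReal.tsum_mul_left, ← (add_left_injective k).tsum_eq]
        · simp
        · intro m hm
          exact ⟨m - k, Nat.sub_add_cancel (by by_contra hkm; simp [hkm] at hm)⟩
    _ = 2 * 2⁻¹ ^ (j - k) := by rw [ENNReal.tsum_geometric_two, mul_comm]

theorem W2_W1_le_two_W2 (ω : ℕ → ℝ≥0∞) (j : ℕ) : W2 (W1 ω) j ≤ 2 * W2 ω j := by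
  simp_rw [W2_eq_tsum, W1_eq_tsum, ← ENNReal.tsum_mul_left, ← mul_assoc]
  rw [ENNReal.tsum_comm]
  refine ENNReal.tsum_le_tsum fun k => ?_
  rw [ENNReal.tsum_mul_right]
  exact mul_le_mul_left (tsum_half_pow_mul_quarter_pow_le j k) _

theorem W2_W1_le_four_W2_general (ω : ℕ → ℝ≥0∞) (j : ℕ) :
    W2 (W1 ω) j ≤ 4 * W2 ω j :=
  (W2_W1_le_two_W2 ω j).trans (mul_le_mul_left (by norm_num) _)

/-- If `ω` is positive, finite and non-decreasing (as a function of `2^{-j}`), then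
`W₂W₁ω ≤ 4 W₂ω`. -/
theorem W2_W1_le_four_W2 (ω : ℕ → ℝ≥0∞) (hpos : ∀ j, 0 < ω j) (hfin : ∀ j, ω j < ⊤)
    (hmono : ∀ j, ω (j + 1) ≤ ω j) (j : ℕ) :
    W2 (W1 ω) j ≤ 4 * W2 ω j :=
  W2_W1_le_four_W2_general ω j
end

section
/- Let $\rho$ and $\mu$ be compactly supported Borel probability measures on $\mathbb{R}$, with $\inf_{E\in\mathbb{R}} \int \log_-|E - E'|\,d\rho(E') > -\infty$. Define $\gamma_\rho(z) = \int \log|z - E|\, d\rho(E)$ for $z \in \mathbb{C}$. Then for any $\epsilon \in (0,1]$ and any $\xi > 0$, $\mu\{E \in \mathbb{R} : |\gamma_\rho(E + i\epsilon) - \gamma_\rho(E)| \ge \xi\} \le \frac{1}{2\xi} \sup_{E'\in\mathbb{R}} \int_{\mathbb{R}} \log\Big(1 + \frac{\epsilon^2}{(E-E')^2}\Big)\, d\mu(E)$. -/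
/-!
For `x ≠ E` one has `log ‖E + iε - x‖ - log |E - x| = ½ log (1 + ε² / (E - x)²)`, and the first
logarithm is bounded on the compact support of `ρ`. The lower bound on `∫ log₋ |E - x| dρ` rules
out atoms of `ρ`, so either the right-hand side is `ρ`-integrable and `γ_ρ(E + iε) - γ_ρ(E)` is
half its integral, or its lower integral is infinite. Hence the set of the theorem lies in
`{E | 2ξ ≤ ∫⁻ log (1 + ε² / (E - x)²) dρ}`, whose `μ`-measure is bounded by Chebyshev's inequality
and Tonelli's theorem.
-/

open MeasureTheory Set Real
open scoped ENNReal

lemma integrable_min_log_abs_zero : Integrable (fun t : ℝ => min (log |t|) 0) := by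
  have hind : (fun t : ℝ => min (log |t|) 0) = (Ioc (-1) 1).indicator log := by
    ext t
    by_cases ht : t ∈ Ioc (-1) 1
    · rw [indicator_of_mem ht, min_eq_left (log_nonpos (abs_nonneg t) (abs_le.2 ⟨ht.1.le, ht.2⟩)),
        log_abs]
    · have h1 : 1 ≤ |t| := by
        rw [mem_Ioc, not_and_or, not_lt, not_le] at ht
        rw [le_abs]
        grind
      rw [indicator_of_notMem ht, min_eq_right (log_nonneg h1)]
  rw [hind, integrable_indicator_iff measurableSet_Ioc]
  exact (intervalIntegrable_iff_integrableOn_Ioc_of_le (by norm_num)).1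
    intervalIntegral.intervalIntegrable_log'

lemma integrable_min_log_abs_sub_zero_prod (ρ : Measure ℝ) [IsFiniteMeasure ρ] :
    Integrable (fun p : ℝ × ℝ => min (log |p.1 - p.2|) 0) (volume.prod ρ) := by
  refine (integrable_prod_iff' (Measurable.aestronglyMeasurable (by fun_prop))).2
    ⟨ae_of_all _ fun x => integrable_min_log_abs_zero.comp_sub_right x, ?_⟩
  simp_rw [integral_sub_right_eq_self (fun t => ‖min (log |t|) 0‖)]
  exact integrable_const _

lemma integral_le_measureReal_singleton_mul {α : Type*} [MeasurableSpace α]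
    [MeasurableSingletonClass α] {μ : Measure α} {f : α → ℝ} (hf : Integrable f μ) (hf0 : f ≤ 0)
    (a : α) : ∫ x, f x ∂μ ≤ μ.real {a} * f a := by
  calc ∫ x, f x ∂μ ≤ ∫ x, ({a} : Set α).indicator f x ∂μ :=
        integral_mono hf (hf.indicator (measurableSet_singleton a)) fun x => by
          by_cases hx : x = a
          · simp [hx]
          · simpa [hx] using hf0 x
    _ = μ.real {a} * f a := by
      rw [integral_indicator (measurableSet_singleton a), integral_singleton, smul_eq_mul]

/-- An atom `p` of mass `a` gives `∫ min (log |E - x|) 0 dρ ≤ a log |E - p|` at every `E` where the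
integrand is integrable, and by Fubini such `E` come arbitrarily close to `p`. -/
theorem nullSingletonClass_of_forall_le_integral_min_log {ρ : Measure ℝ} [IsFiniteMeasure ρ]
    (hlog : ∃ m : ℝ, ∀ E : ℝ, m ≤ ∫ x, min (log |E - x|) 0 ∂ρ) : NullSingletonClass ρ := by
  refine ⟨fun p => ?_⟩
  obtain ⟨m, hm⟩ := hlog
  by_contra hp
  have ha : 0 < ρ.real {p} := ENNReal.toReal_pos hp (measure_ne_top _ _)
  obtain ⟨E, ⟨hpE, hEp⟩, hint⟩ : ∃ E ∈ Ioo p (p + exp (m / ρ.real {p})),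
      Integrable (fun x => min (log |E - x|) 0) ρ :=
    Measure.exists_mem_of_measure_ne_zero_of_ae (by simp [exp_pos])
      (ae_restrict_of_ae (integrable_min_log_abs_sub_zero_prod ρ).prod_right_ae)
  have hlog_lt : log |E - p| < m / ρ.real {p} := by
    rw [abs_of_pos (sub_pos.2 hpE), ← log_exp (m / ρ.real {p})]
    exact log_lt_log (sub_pos.2 hpE) (by linarith)
  refine lt_irrefl m ?_
  calc m ≤ ∫ x, min (log |E - x|) 0 ∂ρ := hm E
    _ ≤ ρ.real {p} * min (log |E - p|) 0 :=
      integral_le_measureReal_singleton_mul hint (fun x => min_le_right _ _) p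
    _ ≤ ρ.real {p} * log |E - p| := by gcongr; exact min_le_left _ _
    _ < m := (lt_div_iff₀' ha).1 hlog_lt

lemma Continuous.integrable_of_measure_compl_eq_zero {X F : Type*} [TopologicalSpace X]
    [T2Space X] [MeasurableSpace X] [OpensMeasurableSpace X] [NormedAddCommGroup F]
    {μ : Measure X} [IsFiniteMeasureOnCompacts μ] {f : X → F} (hf : Continuous f) {K : Set X}
    (hK : IsCompact K) (hKμ : μ Kᶜ = 0) : Integrable f μ := by
  rw [← Measure.restrict_eq_self_of_ae_mem (mem_ae_iff.2 hKμ)]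
  exact hf.continuousOn.integrableOn_compact hK

lemma log_norm_add_mul_I_sub_log_abs {t : ℝ} (ht : t ≠ 0) (ε : ℝ) :
    log ‖(t : ℂ) + ε * Complex.I‖ - log |t| = log (1 + ε ^ 2 / t ^ 2) / 2 := by
  have ht2 : t ^ 2 ≠ 0 := pow_ne_zero 2 ht
  rw [Complex.norm_add_mul_I, log_sqrt (by positivity), log_abs,
    show 1 + ε ^ 2 / t ^ 2 = (t ^ 2 + ε ^ 2) / t ^ 2 by field_simp,
    log_div (by positivity) ht2, log_pow]
  push_cast
  ring

lemma integral_log_norm_add_mul_I_sub_sub_integral_log_abs_sub {ρ : Measure ℝ}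
    [IsFiniteMeasure ρ] {K : Set ℝ} (hK : IsCompact K) (hKρ : ρ Kᶜ = 0) {E ε : ℝ} (hε : ε ≠ 0)
    (hE : ρ {E} = 0) (hf : Integrable (fun x => log (1 + ε ^ 2 / (E - x) ^ 2)) ρ) :
    (∫ x, log ‖(E : ℂ) + ε * Complex.I - x‖ ∂ρ) - ∫ x, log |E - x| ∂ρ
      = (∫ x, log (1 + ε ^ 2 / (E - x) ^ 2) ∂ρ) / 2 := by
  have hg : Integrable (fun x : ℝ => log ‖(E : ℂ) + ε * Complex.I - x‖) ρ := by
    refine Continuous.integrable_of_measure_compl_eq_zero ?_ hK hKρ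
    refine Continuous.log (by fun_prop) fun x h => hε ?_
    simpa using congrArg Complex.im (norm_eq_zero.1 h)
  -- `log 0 = 0` breaks this identity at `x = E`, hence the need for `ρ {E} = 0`.
  have hae : (fun x => log |E - x|) =ᵐ[ρ]
      fun x => log ‖(E : ℂ) + ε * Complex.I - x‖ - log (1 + ε ^ 2 / (E - x) ^ 2) / 2 := by
    filter_upwards [measure_eq_zero_iff_ae_notMem.1 hE] with x hx
    rw [← log_norm_add_mul_I_sub_log_abs (sub_ne_zero.2 (Ne.symm hx)), Complex.ofReal_sub,
      sub_add_eq_add_sub]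
    ring
  rw [integral_congr_ae hae, integral_sub hg (hf.div_const 2), integral_div]
  ring

lemma ofReal_two_mul_le_lintegral_log_one_add_sq_div_sq {ρ : Measure ℝ} [IsFiniteMeasure ρ]
    {K : Set ℝ} (hK : IsCompact K) (hKρ : ρ Kᶜ = 0) {E ε ξ : ℝ} (hε : ε ≠ 0) (hE : ρ {E} = 0)
    (hξ : ξ ≤ |(∫ x, log ‖(E : ℂ) + ε * Complex.I - x‖ ∂ρ) - ∫ x, log |E - x| ∂ρ|) :
    ENNReal.ofReal (2 * ξ) ≤ ∫⁻ x, ENNReal.ofReal (log (1 + ε ^ 2 / (E - x) ^ 2)) ∂ρ := by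
  have hf0 : ∀ x, 0 ≤ log (1 + ε ^ 2 / (E - x) ^ 2) := fun x =>
    log_nonneg (le_add_of_nonneg_right (by positivity))
  by_cases hfin : ∫⁻ x, ENNReal.ofReal (log (1 + ε ^ 2 / (E - x) ^ 2)) ∂ρ = ∞
  · exact hfin ▸ le_top
  have hf : Integrable (fun x => log (1 + ε ^ 2 / (E - x) ^ 2)) ρ :=
    ⟨Measurable.aestronglyMeasurable (by fun_prop),
      (hasFiniteIntegral_iff_ofReal (ae_of_all _ hf0)).2 (lt_top_iff_ne_top.2 hfin)⟩
  rw [integral_log_norm_add_mul_I_sub_sub_integral_log_abs_sub hK hKρ hε hE hf,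
    abs_of_nonneg (div_nonneg (integral_nonneg hf0) two_pos.le)] at hξ
  rw [← ofReal_integral_eq_lintegral_ofReal hf (ae_of_all _ hf0)]
  exact ENNReal.ofReal_le_ofReal (by linarith)

lemma lintegral_lintegral_le_iSup_lintegral {α β : Type*} [MeasurableSpace α]
    [MeasurableSpace β] {μ : Measure α} {ν : Measure β} [SFinite μ] [IsProbabilityMeasure ν]
    {f : α → β → ℝ≥0∞} (hf : Measurable (Function.uncurry f)) :
    ∫⁻ a, ∫⁻ b, f a b ∂ν ∂μ ≤ ⨆ b, ∫⁻ a, f a b ∂μ := by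
  rw [lintegral_lintegral_swap hf.aemeasurable]
  calc ∫⁻ b, ∫⁻ a, f a b ∂μ ∂ν ≤ ∫⁻ _, ⨆ b, ∫⁻ a, f a b ∂μ ∂ν :=
        lintegral_mono fun b => le_iSup (fun b => ∫⁻ a, f a b ∂μ) b
    _ = ⨆ b, ∫⁻ a, f a b ∂μ := by rw [lintegral_const, measure_univ, mul_one]

theorem measure_lyapunov_diff_ge_le_general (ρ μ : Measure ℝ)
    [IsProbabilityMeasure ρ] [IsProbabilityMeasure μ]
    (hρc : ∃ K : Set ℝ, IsCompact K ∧ ρ Kᶜ = 0)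
    (hlog : ∃ m : ℝ, ∀ E : ℝ, m ≤ ∫ E', min (Real.log |E - E'|) 0 ∂ρ)
    (ε ξ : ℝ) (hε0 : 0 < ε) (hξ : 0 < ξ) :
    μ {E : ℝ | ξ ≤ |(∫ x, Real.log ‖(E : ℂ) + ε * Complex.I - (x : ℂ)‖ ∂ρ)
                    - ∫ x, Real.log |E - x| ∂ρ|}
      ≤ ENNReal.ofReal (1 / (2 * ξ)) *
          ⨆ E' : ℝ, ∫⁻ E, ENNReal.ofReal (Real.log (1 + ε ^ 2 / (E - E') ^ 2)) ∂μ := by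
  obtain ⟨K, hK, hKρ⟩ := hρc
  have := nullSingletonClass_of_forall_le_integral_min_log hlog
  have hF : Measurable fun p : ℝ × ℝ => ENNReal.ofReal (log (1 + ε ^ 2 / (p.1 - p.2) ^ 2)) := by
    fun_prop
  have h2ξ : ENNReal.ofReal (2 * ξ) ≠ 0 := by simpa using hξ
  calc _ ≤ μ {E | ENNReal.ofReal (2 * ξ)
          ≤ ∫⁻ x, ENNReal.ofReal (log (1 + ε ^ 2 / (E - x) ^ 2)) ∂ρ} :=
        measure_mono fun E hE => ofReal_two_mul_le_lintegral_log_one_add_sq_div_sq hK hKρ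
          hε0.ne' (measure_singleton E) hE
    _ ≤ (∫⁻ E, ∫⁻ x, ENNReal.ofReal (log (1 + ε ^ 2 / (E - x) ^ 2)) ∂ρ ∂μ)
          / ENNReal.ofReal (2 * ξ) :=
        meas_ge_le_lintegral_div hF.lintegral_prod_right'.aemeasurable h2ξ ENNReal.ofReal_ne_top
    _ ≤ (⨆ E' : ℝ, ∫⁻ E, ENNReal.ofReal (log (1 + ε ^ 2 / (E - E') ^ 2)) ∂μ)
          / ENNReal.ofReal (2 * ξ) := by
        gcongr
        exact lintegral_lintegral_le_iSup_lintegral hF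
    _ = _ := by
        rw [ENNReal.div_eq_inv_mul, one_div, ENNReal.ofReal_inv_of_pos (by positivity)]

/-- For compactly supported probability measures `ρ, μ` on `ℝ`, with
`inf_E ∫ log₋|E - E'| dρ(E') > -∞` and `γ_ρ(z) = ∫ log|z - E| dρ(E)`, one has for any
`ε ∈ (0,1]` and `ξ > 0`:
`μ{E : |γ_ρ(E+iε) - γ_ρ(E)| ≥ ξ} ≤ (2ξ)⁻¹ sup_{E'} ∫ log(1 + ε²/(E-E')²) dμ(E)`. -/
theorem measure_lyapunov_diff_ge_le (ρ μ : Measure ℝ)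
    [IsProbabilityMeasure ρ] [IsProbabilityMeasure μ]
    (hρc : ∃ K : Set ℝ, IsCompact K ∧ ρ Kᶜ = 0)
    (hμc : ∃ K : Set ℝ, IsCompact K ∧ μ Kᶜ = 0)
    (hlog : ∃ m : ℝ, ∀ E : ℝ, m ≤ ∫ E', min (Real.log |E - E'|) 0 ∂ρ)
    (ε ξ : ℝ) (hε0 : 0 < ε) (hε1 : ε ≤ 1) (hξ : 0 < ξ) :
    μ {E : ℝ | ξ ≤ |(∫ x, Real.log ‖(E : ℂ) + ε * Complex.I - (x : ℂ)‖ ∂ρ)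
                    - ∫ x, Real.log |E - x| ∂ρ|}
      ≤ ENNReal.ofReal (1 / (2 * ξ)) *
          ⨆ E' : ℝ, ∫⁻ E, ENNReal.ofReal (Real.log (1 + ε ^ 2 / (E - E') ^ 2)) ∂μ :=
  measure_lyapunov_diff_ge_le_general ρ μ hρc hlog ε ξ hε0 hξ
end

section
/- Let $0 < \lambda < 1$, and suppose real numbers $a_\tau, b_\tau$ and $N_a, N_b \in [\frac{j_0 - 1/2}{q}, \frac{j_0}{q}]$ with $N_a \le N_b$ satisfy $2\cos(2\pi q N_b) = 2 + 2\tau\lambda^q - 2\lambda^q \cos(q\theta)$ and $2\cos(2\pi q N_a) = 2 - 2\tau\lambda^q - 2\lambda^q\cos(q\theta)$, where $0 < \tau \le 1/2$, $q \ge 1$ is an integer, and $\theta$ is such that $\cos(q\theta) > \tau$. Then $N_b - N_a \ge \frac{\tau}{2\pi q}\lambda^{q/2}$. -/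
set_option maxHeartbeats 800000


/-- Core trigonometric estimate: if `0 < λ < 1`, `0 < τ ≤ 1/2`, `q ≥ 1`, `cos(qθ) > τ`,
and `N_a ≤ N_b` lie in `[(j₀ - 1/2)/q, j₀/q]` and satisfy
`2cos(2πqN_b) = 2 + 2τλ^q - 2λ^q cos(qθ)` and `2cos(2πqN_a) = 2 - 2τλ^q - 2λ^q cos(qθ)`,
then `N_b - N_a ≥ (τ/(2πq)) λ^{q/2}`. -/
theorem ids_band_edge_gap (lam τ θ : ℝ) (q j₀ : ℕ) (Na Nb : ℝ)
    (hlam0 : 0 < lam) (hlam1 : lam < 1) (hτ0 : 0 < τ) (hτ : τ ≤ 1 / 2)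
    (hq : 1 ≤ q) (hj₀1 : 1 ≤ j₀) (hj₀q : j₀ ≤ q)
    (hNa : Na ∈ Set.Icc (((j₀ : ℝ) - 1 / 2) / q) ((j₀ : ℝ) / q))
    (hNb : Nb ∈ Set.Icc (((j₀ : ℝ) - 1 / 2) / q) ((j₀ : ℝ) / q))
    (hab : Na ≤ Nb)
    (hcos : τ < Real.cos (q * θ))
    (heqb : 2 * Real.cos (2 * Real.pi * q * Nb)
      = 2 + 2 * τ * lam ^ q - 2 * lam ^ q * Real.cos (q * θ))
    (heqa : 2 * Real.cos (2 * Real.pi * q * Na)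
      = 2 - 2 * τ * lam ^ q - 2 * lam ^ q * Real.cos (q * θ)) :
    τ / (2 * Real.pi * q) * lam ^ ((q : ℝ) / 2) ≤ Nb - Na := by
  have hπ := Real.pi_pos
  have hq0 : (0:ℝ) < q := by exact_mod_cast hq
  set X := 2 * Real.pi * q * Nb with hX
  set Y := 2 * Real.pi * q * Na with hY
  have hXY : Y ≤ X := by
    apply mul_le_mul_of_nonneg_left hab
    positivity
  -- bounds on X, Y
  have hXle : X ≤ 2 * Real.pi * j₀ := by
    have h2 : q * Nb ≤ (j₀ : ℝ) := by
      have := (le_div_iff₀ hq0).mp hNb.2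
      linarith
    rw [hX]; nlinarith
  have hYge : 2 * Real.pi * j₀ - Real.pi ≤ Y := by
    have h1 : ((j₀ : ℝ) - 1 / 2) / q ≤ Na := hNa.1
    have h2 : (j₀ : ℝ) - 1 / 2 ≤ q * Na := by
      rw [div_le_iff₀ hq0] at h1; linarith
    nlinarith
  set m := (X + Y) / 2 with hm
  set d := (X - Y) / 2 with hd
  have hd0 : 0 ≤ d := by rw [hd]; linarith
  -- cos X - cos Y = 2 τ λ^q
  have hlamq : (0:ℝ) < lam ^ q := by positivity
  have hdiff : Real.cos X - Real.cos Y = 2 * τ * lam ^ q := by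
    rw [hX, hY]; linarith
  have hid : Real.cos X - Real.cos Y = -2 * Real.sin m * Real.sin d :=
    Real.cos_sub_cos X Y
  -- cos Y ≥ 1 - (3/2) λ^q
  have hcos1 : Real.cos (q * θ) ≤ 1 := Real.cos_le_one _
  have hcosY : 1 - 3 / 2 * lam ^ q ≤ Real.cos Y := by nlinarith
  -- cos m ≥ cos Y via monotonicity on [2πj₀ - π, 2πj₀]
  have hmY : Y ≤ m := by rw [hm]; linarith
  have hmX : m ≤ X := by rw [hm]; linarith
  have key : ∀ t : ℝ, Real.cos (2 * Real.pi * j₀ - t) = Real.cos t := by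
    intro t
    have : 2 * Real.pi * j₀ - t = -(t - (j₀ : ℤ) * (2 * Real.pi)) := by
      push_cast; ring
    rw [this, Real.cos_neg, Real.cos_sub_int_mul_two_pi]
  have hcosm : Real.cos Y ≤ Real.cos m := by
    rw [← key m, ← key Y]
    apply Real.cos_le_cos_of_nonneg_of_le_pi
    · linarith
    · linarith
    · linarith
  -- sin² m ≤ 3 λ^q
  have hcosm1 : Real.cos m ≤ 1 := Real.cos_le_one _
  have hsinm : Real.sin m ^ 2 ≤ 3 * lam ^ q := by
    have := Real.sin_sq_add_cos_sq m
    nlinarith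
  -- r := λ^(q/2), r² = λ^q
  set r := lam ^ ((q : ℝ) / 2) with hr
  have hr0 : 0 < r := Real.rpow_pos_of_pos hlam0 _
  have hr2 : r * r = lam ^ q := by
    rw [hr, ← Real.rpow_add hlam0, ← Real.rpow_natCast lam q]
    norm_num
  have habsinm : |Real.sin m| ≤ 2 * r := by
    have h4 : (2 * r) ^ 2 = 4 * lam ^ q := by
      rw [← hr2]; ring
    have h2 : |Real.sin m| ^ 2 ≤ (2 * r) ^ 2 := by
      rw [sq_abs, h4]; linarith [hlamq.le]
    exact (abs_le_of_sq_le_sq' h2 (by positivity)).2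
  -- |sin d| ≤ d
  have hsind : |Real.sin d| ≤ d := by
    calc |Real.sin d| ≤ |d| := Real.abs_sin_le_abs
    _ = d := abs_of_nonneg hd0
  -- combine: 2 τ λ^q = |−2 sin m sin d| ≤ 2 (2r) d
  have hmain : 2 * τ * lam ^ q ≤ 2 * (2 * r) * d := by
    have h1 : 2 * τ * lam ^ q = |(-2) * Real.sin m * Real.sin d| := by
      rw [← hid, hdiff, abs_of_nonneg (by positivity)]
    rw [h1]
    calc |(-2) * Real.sin m * Real.sin d| = 2 * |Real.sin m| * |Real.sin d| := by
          rw [abs_mul, abs_mul]; norm_num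
    _ ≤ 2 * (2 * r) * d := by
          apply mul_le_mul _ hsind (abs_nonneg _) (by positivity)
          nlinarith [abs_nonneg (Real.sin m)]
  -- d = π q (Nb - Na)
  have hdval : d = Real.pi * q * (Nb - Na) := by rw [hd, hX, hY]; ring
  -- conclude
  rw [div_mul_eq_mul_div, div_le_iff₀ (by positivity : (0:ℝ) < 2 * Real.pi * q)]
  rw [hdval] at hmain
  nlinarith [hr2, hr0.le, mul_pos hτ0 hr0]
end
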